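/- Let L be a {0,1}-valued random variable and Y, B random variables with finite ranges on the same probability space, with Pr(L=0 | Y=y, B=b) > 0 whenever Pr(Y=y, B=b) > 0. Then susp(Y) ≤ susp(Y,B): revealing an additional random variable B can never decrease the expected suspicion. -/

import Mathlib

open Finset

/-- Probability of an event `E` under the probability mass function `p`
on a finite sample space `Ω`. -/
noncomputable def Pr {Ω : Type*} [Fintype Ω] (p : Ω → ℝ) (E : Set Ω) : ℝ :=
  ∑ ω, E.indicator p ω

/-- Conditional probability `Pr(E | F)`. -/
noncomputable def cPr {Ω : Type*} [Fintype Ω] (p : Ω → ℝ) (E F : Set Ω) : ℝ :=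
  Pr p (E ∩ F) / Pr p F

/-- The suspicion given a random variable `Yv`:
`susp(Y) = Σ_y Pr(Y=y) · (−log₂ Pr(L=0 | Y=y))`. -/
noncomputable def susp {Ω Y : Type*} [Fintype Ω] [Fintype Y] (p : Ω → ℝ)
    (L : Ω → Bool) (Yv : Ω → Y) : ℝ :=
  ∑ y, Pr p {ω | Yv ω = y} * (-Real.logb 2 (cPr p {ω | L ω = false} {ω | Yv ω = y}))

/-- Mutual information (base 2) between two finite-valued random variables. -/
noncomputable def mutInfo {Ω S T : Type*} [Fintype Ω] [Fintype S] [Fintype T]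
    (p : Ω → ℝ) (Xv : Ω → S) (Av : Ω → T) : ℝ :=
  ∑ x, ∑ a, Pr p {ω | Xv ω = x ∧ Av ω = a} *
    Real.logb 2 (Pr p {ω | Xv ω = x ∧ Av ω = a} /
      (Pr p {ω | Xv ω = x} * Pr p {ω | Av ω = a}))

/-- Conditional Shannon entropy (base 2) `H(A | X)`. -/
noncomputable def condEntropy {Ω S T : Type*} [Fintype Ω] [Fintype S] [Fintype T]
    (p : Ω → ℝ) (Av : Ω → T) (Xv : Ω → S) : ℝ :=
  ∑ x, ∑ a, Pr p {ω | Xv ω = x ∧ Av ω = a} *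
    Real.logb 2 (Pr p {ω | Xv ω = x} / Pr p {ω | Xv ω = x ∧ Av ω = a})

/-- Conditional mutual information (base 2) `I(X; A | Z)`. -/
noncomputable def condMutInfo {Ω S T U : Type*} [Fintype Ω] [Fintype S] [Fintype T] [Fintype U]
    (p : Ω → ℝ) (Xv : Ω → S) (Av : Ω → T) (Zv : Ω → U) : ℝ :=
  ∑ z, ∑ x, ∑ a, Pr p {ω | Xv ω = x ∧ Av ω = a ∧ Zv ω = z} *
    Real.logb 2 ((Pr p {ω | Xv ω = x ∧ Av ω = a ∧ Zv ω = z} * Pr p {ω | Zv ω = z}) /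
      (Pr p {ω | Xv ω = x ∧ Zv ω = z} * Pr p {ω | Av ω = a ∧ Zv ω = z}))

/-!
Fibre by fibre over `Y = y`, writing `w b = Pr(Y=y, B=b)` and `n b = Pr(L=0, Y=y, B=b)`,
the claim is the log-sum inequality `∑ w b · log (n b / w b) ≤ (∑ w) · log (∑ n / ∑ w)`,
which is Jensen's inequality for the concave `log` with weights `w b / ∑ w` at the points
`n b / w b`. The hypothesis on `L` keeps every such point in the domain `(0, ∞)` of `log`.
-/

section LogSum

variable {ι : Type*} (s : Finset ι) {w n : ι → ℝ}

theorem sum_mul_log_div_le_of_pos (hw : ∀ i ∈ s, 0 < w i) (hn : ∀ i ∈ s, 0 < n i) :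
    ∑ i ∈ s, w i * Real.log (n i / w i) ≤
      (∑ i ∈ s, w i) * Real.log ((∑ i ∈ s, n i) / ∑ i ∈ s, w i) := by
  rcases s.eq_empty_or_nonempty with rfl | hs
  · simp
  set W := ∑ i ∈ s, w i
  have hW : 0 < W := sum_pos hw hs
  have jensen := strictConcaveOn_log_Ioi.concaveOn.le_map_sum (t := s)
    (w := fun i => w i / W) (p := fun i => n i / w i)
    (fun i hi => (div_pos (hw i hi) hW).le)
    (by rw [← sum_div, div_self hW.ne'])
    (fun i hi => div_pos (hn i hi) (hw i hi))
  have mean : ∑ i ∈ s, w i / W * (n i / w i) = (∑ i ∈ s, n i) / W := by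
    rw [sum_div]
    refine sum_congr rfl fun i hi => ?_
    field_simp [(hw i hi).ne']
  simp only [smul_eq_mul, mean] at jensen
  calc ∑ i ∈ s, w i * Real.log (n i / w i)
      = W * ∑ i ∈ s, w i / W * Real.log (n i / w i) := by
        rw [mul_sum]
        refine sum_congr rfl fun i _ => ?_
        field_simp
    _ ≤ W * Real.log ((∑ i ∈ s, n i) / W) := mul_le_mul_of_nonneg_left jensen hW.le

/-- The log-sum inequality. -/
theorem sum_mul_log_div_le (hw : ∀ i ∈ s, 0 ≤ w i) (hn : ∀ i ∈ s, 0 < w i → 0 < n i)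
    (hn₀ : ∀ i ∈ s, w i = 0 → n i = 0) :
    ∑ i ∈ s, w i * Real.log (n i / w i) ≤
      (∑ i ∈ s, w i) * Real.log ((∑ i ∈ s, n i) / ∑ i ∈ s, w i) := by
  have supp : ∀ i ∈ s, w i ≠ 0 → 0 < w i := fun i hi h => (hw i hi).lt_of_ne' h
  have hW : ∑ i ∈ s with 0 < w i, w i = ∑ i ∈ s, w i := sum_filter_of_ne supp
  have hN : ∑ i ∈ s with 0 < w i, n i = ∑ i ∈ s, n i :=
    sum_filter_of_ne fun i hi h => supp i hi (mt (hn₀ i hi) h)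
  have hL : ∑ i ∈ s with 0 < w i, w i * Real.log (n i / w i) =
      ∑ i ∈ s, w i * Real.log (n i / w i) :=
    sum_filter_of_ne fun i hi h => supp i hi (left_ne_zero_of_mul h)
  rw [← hW, ← hN, ← hL]
  exact sum_mul_log_div_le_of_pos _ (fun i hi => (mem_filter.1 hi).2)
    (fun i hi => hn i (mem_filter.1 hi).1 (mem_filter.1 hi).2)

end LogSum

section Pr

variable {Ω : Type*} [Fintype Ω] {p : Ω → ℝ}

theorem Pr_nonneg (hp : ∀ ω, 0 ≤ p ω) (E : Set Ω) : 0 ≤ Pr p E :=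
  sum_nonneg fun ω _ => Set.indicator_nonneg (fun x _ => hp x) ω

theorem Pr_mono (hp : ∀ ω, 0 ≤ p ω) {E F : Set Ω} (h : E ⊆ F) : Pr p E ≤ Pr p F :=
  sum_le_sum fun ω _ => Set.indicator_le_indicator_of_subset h hp ω

theorem sum_Pr_inter_fiber {B : Type*} [Fintype B] (p : Ω → ℝ) (E : Set Ω) (Bv : Ω → B) :
    ∑ b, Pr p (E ∩ {ω | Bv ω = b}) = Pr p E := by
  classical
  unfold Pr
  rw [sum_comm]
  refine sum_congr rfl fun ω _ => ?_
  by_cases hE : ω ∈ E <;> simp [Set.indicator_apply, hE]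

theorem Pr_mul_neg_logb_cPr_le_sum_fiber {B : Type*} [Fintype B] (hp : ∀ ω, 0 ≤ p ω)
    (E F : Set Ω) (Bv : Ω → B)
    (hpos : ∀ b, 0 < Pr p (F ∩ {ω | Bv ω = b}) → 0 < cPr p E (F ∩ {ω | Bv ω = b})) :
    Pr p F * -Real.logb 2 (cPr p E F) ≤
      ∑ b, Pr p (F ∩ {ω | Bv ω = b}) * -Real.logb 2 (cPr p E (F ∩ {ω | Bv ω = b})) := by
  set w := fun b => Pr p (F ∩ {ω | Bv ω = b})
  set n := fun b => Pr p (E ∩ (F ∩ {ω | Bv ω = b}))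
  have hW : Pr p F = ∑ b, w b := (sum_Pr_inter_fiber p F Bv).symm
  have hN : Pr p (E ∩ F) = ∑ b, n b := by
    simp only [n, ← Set.inter_assoc]
    exact (sum_Pr_inter_fiber p (E ∩ F) Bv).symm
  have logSum := sum_mul_log_div_le univ (w := w) (n := n)
    (fun b _ => Pr_nonneg hp _)
    (fun b _ hb => pos_of_mul_pos_left (hpos b hb) (inv_nonneg.2 hb.le))
    (fun b _ hb => le_antisymm (hb ▸ Pr_mono hp Set.inter_subset_right) (Pr_nonneg hp _))
  have hlog2 : 0 < Real.log 2 := Real.log_pos one_lt_two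
  unfold cPr
  rw [hW, hN]
  simp only [Real.logb, mul_neg, ← mul_div_assoc, sum_neg_distrib, ← sum_div, neg_le_neg_iff]
  exact div_le_div_of_nonneg_right logSum hlog2.le

end Pr

theorem susp_le_susp_pair_general {Ω Y B : Type*} [Fintype Ω] [Fintype Y] [Fintype B]
    (p : Ω → ℝ) (hp : ∀ ω, 0 ≤ p ω)
    (L : Ω → Bool) (Yv : Ω → Y) (Bv : Ω → B)
    (hpos : ∀ (y : Y) (b : B), 0 < Pr p {ω | Yv ω = y ∧ Bv ω = b} →
      0 < cPr p {ω | L ω = false} {ω | Yv ω = y ∧ Bv ω = b}) :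
    susp p L Yv ≤ susp p L (fun ω => (Yv ω, Bv ω)) := by
  have pair_fiber : ∀ y b, {ω | (Yv ω, Bv ω) = (y, b)} = {ω | Yv ω = y} ∩ {ω | Bv ω = b} := by
    intro y b
    ext ω
    simp [Prod.ext_iff]
  unfold susp
  rw [Fintype.sum_prod_type]
  simp only [pair_fiber]
  refine sum_le_sum fun y _ => Pr_mul_neg_logb_cPr_le_sum_fiber hp _ _ Bv fun b => ?_
  simpa only [← Set.ofPred_and] using hpos y b

/-- revealing an additional random variable `B` can never
decrease the expected suspicion: `susp(Y) ≤ susp(Y,B)`. -/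
theorem susp_le_susp_pair {Ω Y B : Type*} [Fintype Ω] [Fintype Y] [Fintype B]
    (p : Ω → ℝ) (hp : ∀ ω, 0 ≤ p ω) (hp1 : ∑ ω, p ω = 1)
    (L : Ω → Bool) (Yv : Ω → Y) (Bv : Ω → B)
    (hpos : ∀ (y : Y) (b : B), 0 < Pr p {ω | Yv ω = y ∧ Bv ω = b} →
      0 < cPr p {ω | L ω = false} {ω | Yv ω = y ∧ Bv ω = b}) :
    susp p L Yv ≤ susp p L (fun ω => (Yv ω, Bv ω)) :=
  susp_le_susp_pair_general p hp L Yv Bv hpos
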